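/- Let I = [0,1] be the unit interval with the metric induced from ℝ. For every compact subset K ⊂ (0,∞) and every ε > 0 there exists δ > 0 such that: for every finite nonempty subset A ⊆ I whose Hausdorff distance from I satisfies d_H(A, I) < δ, and every t ∈ K, one has |(1 + t) − |tA|_Rips| < ε. In other words, |tA|_Rips → 1 + t as A → I in the Hausdorff metric, uniformly on compact subsets of (0,∞). -/

import Mathlib

/-!
For finite `A ⊂ ℝ`, adding a point `x` below `m = min A` changes `|tA|_Rips` by
`1 - e^{-t(m - x)}`: among the new subsets `insert x B`, those with `B ≠ ∅` pair off as
`B ↔ insert m B`, with equal diameter and opposite signs. Hence `|tA|_Rips - 1` is the sum of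
`1 - e^{-t g}` over the gaps `g` of `A`, which lies between `e^{-tc} t (max A - min A)` and
`t (max A - min A)` when all gaps are at most `c`. A finite `A ⊆ [0,1]` that is `δ`-dense in
`[0,1]` has gaps at most `2δ` and spans at least `1 - 2δ`, so `|1 + t - |tA|_Rips| ≤ 2δt(t + 1)`.
-/

open scoped BigOperators

/-- The Rips magnitude function of a finite subset `A` of a metric space:
`|tA|_Rips = Σ_{∅ ≠ B ⊆ A} (−1)^{#B−1} e^{−diam(B)·t}`. -/
noncomputable def ripsMag {Y : Type*} [MetricSpace Y] (A : Finset Y) (t : ℝ) : ℝ :=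
  ∑ B ∈ A.powerset.filter (fun B => B.Nonempty),
    (-1 : ℝ) ^ (B.card - 1) * Real.exp (-(Metric.diam (B : Set Y)) * t)

open Finset

theorem Finset.Nonempty.induction_on_min {α : Type*} [LinearOrder α]
    {motive : ∀ s : Finset α, s.Nonempty → Prop}
    (singleton : ∀ a, motive {a} (singleton_nonempty a))
    (insert : ∀ a s (hs : s.Nonempty), (∀ x ∈ s, a < x) → motive s hs →
      motive (insert a s) (insert_nonempty a s))
    {s : Finset α} (hs : s.Nonempty) : motive s hs := by
  classical
  induction s using Finset.induction_on_min with
  | empty => exact absurd hs Finset.not_nonempty_empty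
  | insert a s has ih =>
    rcases s.eq_empty_or_nonempty with rfl | hs'
    · exact singleton a
    · exact insert a s hs' has (ih hs')

theorem Finset.sum_powerset_insert_of_insert_eq_neg {α M : Type*} [DecidableEq α]
    [AddCommGroup M] {s : Finset α} {a : α} (ha : a ∉ s) {f : Finset α → M}
    (hf : ∀ B ⊆ s, B.Nonempty → f (insert a B) = -f B) :
    ∑ B ∈ (insert a s).powerset, f B = f ∅ + f {a} := by
  rw [sum_powerset_insert ha, ← sum_add_distrib, sum_eq_single ∅]
  · rfl
  · intro B hB hne
    rw [hf B (mem_powerset.1 hB) (nonempty_iff_ne_empty.2 hne), add_neg_cancel]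
  · exact fun h => absurd (empty_mem_powerset s) h

theorem Metric.diam_insert_of_mem_convexHull {E : Type*} [SeminormedAddCommGroup E]
    [NormedSpace ℝ E] {s : Set E} {x : E} (hx : x ∈ convexHull ℝ s) :
    Metric.diam (insert x s) = Metric.diam s := by
  refine congrArg ENNReal.toReal (le_antisymm ?_ (Metric.ediam_mono (Set.subset_insert x s)))
  calc Metric.ediam (insert x s) ≤ Metric.ediam (convexHull ℝ s) :=
        Metric.ediam_mono (Set.insert_subset hx (subset_convexHull ℝ s))
    _ = Metric.ediam s := convexHull_ediam s

theorem Real.mul_exp_neg_le_one_sub_exp_neg {u v : ℝ} (hu : 0 ≤ u) (huv : u ≤ v) :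
    u * Real.exp (-v) ≤ 1 - Real.exp (-u) := by
  have hexp : Real.exp (-v) ≤ Real.exp (-u) := Real.exp_le_exp.2 (neg_le_neg huv)
  have hmul : (u + 1) * Real.exp (-u) ≤ 1 := by
    simpa [← Real.exp_add] using
      mul_le_mul_of_nonneg_right (Real.add_one_le_exp u) (Real.exp_pos (-u)).le
  nlinarith

section RipsMagnitude

variable {Y : Type*} [MetricSpace Y]

theorem ripsMag_eq_sum_powerset_sub_one (A : Finset Y) (t : ℝ) :
    ripsMag A t = ∑ B ∈ A.powerset,
      (-1 : ℝ) ^ (B.card - 1) * Real.exp (-(Metric.diam (B : Set Y)) * t) - 1 := by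
  classical
  have hfilter : A.powerset.filter (fun B => B.Nonempty) = A.powerset.erase ∅ := by
    ext B
    simp [nonempty_iff_ne_empty, and_comm]
  rw [ripsMag, hfilter, sum_erase_eq_sub (empty_mem_powerset A)]
  simp

theorem ripsMag_singleton (y : Y) (t : ℝ) : ripsMag ({y} : Finset Y) t = 1 := by
  classical
  have hpow : ({y} : Finset Y).powerset = {∅, {y}} := by
    ext B
    simp [subset_singleton_iff]
  rw [ripsMag_eq_sum_powerset_sub_one, hpow, sum_pair (singleton_ne_empty y).symm]
  simp

theorem ripsMag_insert [DecidableEq Y] {x : Y} {A : Finset Y} (hx : x ∉ A) (t : ℝ) :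
    ripsMag (insert x A) t = ripsMag A t + ∑ B ∈ A.powerset,
      (-1 : ℝ) ^ B.card * Real.exp (-(Metric.diam ((insert x B : Finset Y) : Set Y)) * t) := by
  rw [ripsMag_eq_sum_powerset_sub_one, ripsMag_eq_sum_powerset_sub_one, sum_powerset_insert hx,
    add_sub_right_comm]
  congr 1
  refine sum_congr rfl fun B hB => ?_
  rw [card_insert_of_notMem fun hxB => hx (mem_powerset.1 hB hxB), Nat.add_sub_cancel]

end RipsMagnitude

theorem ripsMag_insert_insert {x m : ℝ} {A : Finset ℝ} (hxm : x < m) (hmA : ∀ a ∈ A, m < a)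
    (t : ℝ) :
    ripsMag (insert x (insert m A)) t = ripsMag (insert m A) t + 1 - Real.exp (-(m - x) * t) := by
  have hxA : x ∉ insert m A := by
    simp only [mem_insert, not_or]
    exact ⟨hxm.ne, fun hx => (hxm.trans (hmA x hx)).false⟩
  rw [ripsMag_insert hxA, sum_powerset_insert_of_insert_eq_neg fun hm => (hmA m hm).false]
  · simp only [card_empty, pow_zero, insert_empty_eq, coe_singleton, Metric.diam_singleton,
      neg_zero, zero_mul, Real.exp_zero, mul_one, card_singleton, pow_one, coe_insert,
      Metric.diam_pair, Real.dist_eq, abs_of_neg (sub_neg.2 hxm), neg_sub, neg_mul, one_mul]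
    ring
  · intro B hB ⟨b, hb⟩
    have hmB : m ∉ B := fun hm => (hmA m (hB hm)).false
    have hm_hull : m ∈ convexHull ℝ (insert x (B : Set ℝ)) :=
      segment_subset_convexHull (Set.mem_insert x _) (Set.mem_insert_of_mem x hb)
        (by rw [segment_eq_Icc (hxm.trans (hmA b (hB hb))).le]
            exact ⟨hxm.le, (hmA b (hB hb)).le⟩)
    rw [insert_comm, card_insert_of_notMem hmB, coe_insert, coe_insert,
      Metric.diam_insert_of_mem_convexHull hm_hull, pow_succ]
    ring

theorem ripsMag_insert_of_forall_lt {x : ℝ} {A : Finset ℝ} (hA : A.Nonempty)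
    (hx : ∀ a ∈ A, x < a) (t : ℝ) :
    ripsMag (insert x A) t = ripsMag A t + 1 - Real.exp (-(A.min' hA - x) * t) := by
  have hmin := min'_mem A hA
  have h := ripsMag_insert_insert (hx _ hmin) (A := A.erase (A.min' hA))
    (fun a ha => (min'_le A a (mem_of_mem_erase ha)).lt_of_ne (ne_of_mem_erase ha).symm) t
  rwa [insert_erase hmin] at h

theorem ripsMag_le_one_add {A : Finset ℝ} (hA : A.Nonempty) (t : ℝ) :
    ripsMag A t ≤ 1 + t * (A.max' hA - A.min' hA) := by
  induction hA using Finset.Nonempty.induction_on_min with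
  | singleton a => simp [ripsMag_singleton]
  | insert a s hs has ih =>
    have has_max : a < s.max' hs := has _ (max'_mem s hs)
    have has_min : a < s.min' hs := has _ (min'_mem s hs)
    rw [ripsMag_insert_of_forall_lt hs has, max'_insert a s hs, min'_insert a s hs,
      max_eq_right has_max.le, min_eq_left has_min.le, neg_mul]
    nlinarith [Real.add_one_le_exp (-((s.min' hs - a) * t))]

def HasGapsAtMost (A : Finset ℝ) (c : ℝ) : Prop :=
  ∀ x ∈ A, (∃ y ∈ A, x < y) → ∃ y ∈ A, x < y ∧ y ≤ x + c

theorem HasGapsAtMost.of_insert {x c : ℝ} {A : Finset ℝ} (h : HasGapsAtMost (insert x A) c)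
    (hx : ∀ a ∈ A, x < a) : HasGapsAtMost A c := by
  rintro z hz ⟨y, hy, hzy⟩
  obtain ⟨w, hw, hzw, hwc⟩ := h z (mem_insert_of_mem hz) ⟨y, mem_insert_of_mem hy, hzy⟩
  rcases mem_insert.1 hw with rfl | hw
  · exact absurd (hx z hz) hzw.not_gt
  · exact ⟨w, hw, hzw, hwc⟩

theorem HasGapsAtMost.min'_sub_le {x c : ℝ} {A : Finset ℝ} (h : HasGapsAtMost (insert x A) c)
    (hA : A.Nonempty) (hx : ∀ a ∈ A, x < a) : A.min' hA - x ≤ c := by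
  obtain ⟨w, hw, hxw, hwc⟩ :=
    h x (mem_insert_self x A) ⟨_, mem_insert_of_mem (min'_mem A hA), hx _ (min'_mem A hA)⟩
  rcases mem_insert.1 hw with rfl | hw
  · exact absurd hxw (lt_irrefl _)
  · linarith [min'_le A w hw]

theorem one_add_exp_mul_le_ripsMag {A : Finset ℝ} (hA : A.Nonempty) {c t : ℝ} (ht : 0 ≤ t)
    (hgap : HasGapsAtMost A c) :
    1 + Real.exp (-(c * t)) * (t * (A.max' hA - A.min' hA)) ≤ ripsMag A t := by
  induction hA using Finset.Nonempty.induction_on_min with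
  | singleton a => simp [ripsMag_singleton]
  | insert a s hs has ih =>
    have has_max : a < s.max' hs := has _ (max'_mem s hs)
    have has_min : a < s.min' hs := has _ (min'_mem s hs)
    have hstep := Real.mul_exp_neg_le_one_sub_exp_neg
      (mul_nonneg (sub_nonneg.2 has_min.le) ht)
      (mul_le_mul_of_nonneg_right (hgap.min'_sub_le hs has) ht)
    have hs_gap := ih (hgap.of_insert has)
    rw [ripsMag_insert_of_forall_lt hs has, max'_insert a s hs, min'_insert a s hs,
      max_eq_right has_max.le, min_eq_left has_min.le, neg_mul]
    nlinarith

theorem hasGapsAtMost_two_mul_of_forall_exists_dist_lt {A : Finset ℝ} {a b δ : ℝ} (hA : (A : Set ℝ) ⊆ Set.Icc a b)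
    (hdense : ∀ z ∈ Set.Icc a b, ∃ y ∈ A, dist y z < δ) : HasGapsAtMost A (2 * δ) := by
  rintro x hx ⟨y, hy, hxy⟩
  have hδ : 0 < δ := by
    obtain ⟨w, -, hw⟩ := hdense x (hA hx)
    exact dist_nonneg.trans_lt hw
  by_cases hb : x + δ ≤ b
  · obtain ⟨w, hw, hd⟩ := hdense (x + δ) ⟨by linarith [(hA hx).1], hb⟩
    rw [Real.dist_eq, abs_lt] at hd
    exact ⟨w, hw, by linarith, by linarith⟩
  · exact ⟨y, hy, hxy, by linarith [(hA hy).2]⟩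

theorem abs_one_add_sub_ripsMag_le {A : Finset ℝ} {δ t : ℝ}
    (hA : (A : Set ℝ) ⊆ Set.Icc 0 1) (hdense : ∀ z ∈ Set.Icc (0 : ℝ) 1, ∃ y ∈ A, dist y z < δ)
    (ht : 0 ≤ t) : |1 + t - ripsMag A t| ≤ 2 * δ * t * (t + 1) := by
  obtain ⟨y₀, hy₀, hy₀δ⟩ := hdense 0 (by simp)
  obtain ⟨y₁, hy₁, hy₁δ⟩ := hdense 1 (by simp)
  have hne : A.Nonempty := ⟨y₀, hy₀⟩
  rw [Real.dist_eq, abs_lt] at hy₀δ hy₁δ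
  have hmin : A.min' hne < δ := by linarith [min'_le A y₀ hy₀]
  have hmax : 1 - δ < A.max' hne := by linarith [le_max' A y₁ hy₁]
  have hmin_nonneg : 0 ≤ A.min' hne := (hA (min'_mem A hne)).1
  have hmax_le : A.max' hne ≤ 1 := (hA (max'_mem A hne)).2
  have hupper := ripsMag_le_one_add hne t
  have hlower := one_add_exp_mul_le_ripsMag hne ht (hasGapsAtMost_two_mul_of_forall_exists_dist_lt hA hdense)
  set E := Real.exp (-(2 * δ * t))
  have hE_le : E ≤ 1 := Real.exp_le_one_iff.2 (by nlinarith)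
  have hE_ge : 1 - 2 * δ * t ≤ E := by linarith [Real.add_one_le_exp (-(2 * δ * t))]
  rw [abs_le]
  constructor <;> nlinarith [mul_nonneg ht (Real.exp_pos (-(2 * δ * t))).le]

/-- `|tA|_Rips → 1 + t` as the finite set `A ⊆ [0,1]` converges to
`[0,1]` in the Hausdorff metric, uniformly for `t` in compact subsets of `(0,∞)`. -/
theorem ripsMag_unitInterval_hausdorff_limit
    (K : Set ℝ) (hK : IsCompact K) (hKpos : K ⊆ Set.Ioi (0 : ℝ))
    (ε : ℝ) (hε : 0 < ε) :
    ∃ δ : ℝ, 0 < δ ∧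
      ∀ A : Finset ℝ, (A : Set ℝ) ⊆ Set.Icc (0 : ℝ) 1 → A.Nonempty →
        Metric.hausdorffDist (A : Set ℝ) (Set.Icc (0 : ℝ) 1) < δ →
        ∀ t ∈ K, |(1 + t) - ripsMag A t| < ε := by
  obtain ⟨M, hM⟩ := hK.bddAbove
  set N := |M| + 1
  have hN_pos : 0 < N := by positivity
  refine ⟨ε / (2 * N * (N + 1)), by positivity, fun A hA hne hdist t ht => ?_⟩
  have hdense : ∀ z ∈ Set.Icc (0 : ℝ) 1, ∃ y ∈ A, dist y z < ε / (2 * N * (N + 1)) :=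
    fun z hz => Metric.exists_dist_lt_of_hausdorffDist_lt' hz hdist
      (Metric.hausdorffEDist_ne_top_of_nonempty_of_bounded (coe_nonempty.2 hne)
        ⟨0, by simp⟩ A.finite_toSet.isBounded (Metric.isBounded_Icc 0 1))
  have ht_pos : 0 < t := hKpos ht
  have ht_lt : t < N := by linarith [hM ht, le_abs_self M]
  calc |1 + t - ripsMag A t| ≤ 2 * (ε / (2 * N * (N + 1))) * t * (t + 1) :=
        abs_one_add_sub_ripsMag_le hA hdense ht_pos.le
    _ < 2 * (ε / (2 * N * (N + 1))) * N * (N + 1) := by gcongr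
    _ = ε := by field_simp
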